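/- There exists a direct sequence of towers of groups (G_{ij}, p_{ij}, h_{ij}) in which every G_{ij} is a free group of finite rank (in particular finitely generated), such that, setting Γ_j = lim_i G_{ij} with the homomorphisms Γ_j → Γ_{j+1} induced by the horizontal maps: (i) for every j and every γ ∈ Γ_j there exists k ≥ j such that the composite homomorphism Γ_j → Γ_k sends γ to the identity (i.e., colim_j Γ_j is trivial); but (ii) for every j and every k ≥ j the composite homomorphism Γ_j → Γ_k is not trivial (its image is not the trivial subgroup). (Hence the hypothesis of commutativity cannot be dropped from the statement that a direct sequence of inverse limits of towers of finitely generated abelian groups with trivial colimit has eventually trivial bonding maps.) -/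

import Mathlib

/-- The composite homomorphism `G_{i,j} → G_{i,j+k}` of the horizontal maps of a
direct sequence of towers of groups (the identity when `k = 0`). -/
def hIterM (G : ℕ → ℕ → GrpCat) (h : ∀ i j, ↥(G i j) →* ↥(G i (j + 1)))
    (i j : ℕ) : ∀ k, ↥(G i j) →* ↥(G i (j + k))
  | 0 => MonoidHom.id _
  | k + 1 => (h i (j + k)).comp (hIterM G h i j k)

/-!
`H t` is free on `a` and `b_r` (`r < 2 ^ t`); the conjugates `B t m = a^q b_r a^(-q)`, where
`m = q 2^t + r`, freely generate the kernel of the `a`-exponent, and conjugation by `a` shifts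
`m` by `2 ^ t`. Take `G_{ij} = H (i - j)` for `i ≥ j`. The vertical maps send
`a ↦ a²` and `B m ↦ B m`; they are injective, so the `a`-exponent of a thread is divisible by
every power of `2`, hence zero, and the thread is one fixed word in the `B m` at every level.
The horizontal map out of column `j` sends `a ↦ a`, `B m ↦ B (m / 2 + j % 2)` for odd `m` and
`B m ↦ 1` for even `m`. Along this partial dynamics `3m - 1 + 2 (j % 2)` is halved exactly at
each step and never vanishes, so every index dies after finitely many steps, while for each `k`
some index survives `k` steps.
-/

theorem FreeGroup.exists_finset_mem_closure {α : Type*} [DecidableEq α]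
    (w : FreeGroup α) : ∃ s : Finset α, w ∈ Subgroup.closure (FreeGroup.of '' s) := by
  induction w using FreeGroup.induction_on with
  | C1 => exact ⟨∅, one_mem _⟩
  | of x => exact ⟨{x}, Subgroup.subset_closure (by simp)⟩
  | inv_of x hx =>
    obtain ⟨s, hs⟩ := hx
    exact ⟨s, inv_mem hs⟩
  | mul x y hx hy =>
    obtain ⟨s, hs⟩ := hx
    obtain ⟨s', hs'⟩ := hy
    refine ⟨s ∪ s', mul_mem ?_ ?_⟩
    · exact Subgroup.closure_mono (by gcongr; exact Finset.subset_union_left) hs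
    · exact Subgroup.closure_mono (by gcongr; exact Finset.subset_union_right) hs'

universe u

namespace FreeTower

abbrev H (t : ℕ) : Type u := FreeGroup (ULift.{u} (Option (ZMod (2 ^ t))))

def a (t : ℕ) : H.{u} t := FreeGroup.of (.up none)

def b (t : ℕ) (r : ZMod (2 ^ t)) : H.{u} t := FreeGroup.of (.up (some r))

def B (t : ℕ) (m : ℤ) : H.{u} t := a t ^ (m / 2 ^ t) * b t m * a t ^ (-(m / 2 ^ t))

theorem B_add_mul (t : ℕ) (m q : ℤ) :
    B.{u} t (m + q * 2 ^ t) = a t ^ q * B t m * a t ^ (-q) := by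
  have hdiv : (m + q * 2 ^ t) / 2 ^ t = m / 2 ^ t + q :=
    Int.add_mul_ediv_right m q (by positivity)
  have hmod : ((m + q * 2 ^ t : ℤ) : ZMod (2 ^ t)) = m := by
    have : ((2 : ℤ) ^ t : ZMod (2 ^ t)) = 0 := by exact_mod_cast ZMod.natCast_self (2 ^ t)
    push_cast at this ⊢
    rw [this, mul_zero, add_zero]
  simp only [B, hdiv, hmod, zpow_add]
  group

theorem B_natCast_val (t : ℕ) (r : ZMod (2 ^ t)) : B.{u} t r.val = b t r := by
  have : (r.val : ℤ) / 2 ^ t = 0 :=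
    Int.ediv_eq_zero_of_lt (by positivity) (by exact_mod_cast ZMod.val_lt r)
  rw [B, this, Int.cast_natCast, ZMod.natCast_zmod_val]
  group

theorem hom_ext {t : ℕ} {K : Type*} [Group K] {φ ψ : H.{u} t →* K} (ha : φ (a t) = ψ (a t))
    (hB : ∀ m, φ (B t m) = ψ (B t m)) : φ = ψ := by
  refine FreeGroup.ext_hom _ _ fun ⟨x⟩ => ?_
  cases x with
  | none => exact ha
  | some r =>
    have := hB r.val
    rwa [B_natCast_val] at this

theorem B_ne_one (t : ℕ) (m : ℤ) : B.{u} t m ≠ 1 := by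
  rw [B, zpow_neg, Ne, conj_eq_one_iff]
  exact FreeGroup.of_ne_one _

def liftB (t : ℕ) : FreeGroup ℤ →* H.{u} t := FreeGroup.lift (B t)

@[simp] theorem liftB_of (t : ℕ) (m : ℤ) : liftB.{u} t (.of m) = B t m :=
  FreeGroup.lift_apply_of

def expA (t : ℕ) : H.{u} t →* Multiplicative ℤ :=
  FreeGroup.lift fun x => x.down.elim (.ofAdd 1) fun _ => 1

@[simp] theorem expA_a (t : ℕ) : expA.{u} t (a t) = .ofAdd 1 := FreeGroup.lift_apply_of

@[simp] theorem expA_b (t : ℕ) (r : ZMod (2 ^ t)) : expA.{u} t (b t r) = 1 :=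
  FreeGroup.lift_apply_of

theorem a_zpow_mul_mul_mem_range (t : ℕ) (e : ℤ) {y : H.{u} t} (hy : y ∈ (liftB t).range) :
    a t ^ e * y * a t ^ (-e) ∈ (liftB t).range := by
  obtain ⟨w, rfl⟩ := hy
  refine ⟨FreeGroup.map (· + e * 2 ^ t) w, ?_⟩
  have : (liftB t).comp (FreeGroup.map (· + e * 2 ^ t)) =
      (MulAut.conj (a t ^ e)).toMonoidHom.comp (liftB t) :=
    FreeGroup.ext_hom _ _ fun m => by
      simp only [MonoidHom.comp_apply, FreeGroup.map.of, liftB_of, B_add_mul,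
        MulEquiv.coe_toMonoidHom, MulAut.conj_apply, zpow_neg]
  simpa only [MonoidHom.comp_apply, MulEquiv.coe_toMonoidHom, MulAut.conj_apply, zpow_neg]
    using DFunLike.congr_fun this w

theorem ker_expA_le_range (t : ℕ) : (expA.{u} t).ker ≤ (liftB t).range := by
  have key : ∀ x : H t, x * a t ^ (-(expA t x).toAdd) ∈ (liftB t).range := by
    intro x
    induction x using FreeGroup.induction_on with
    | C1 => simp
    | of x =>
      rcases x with ⟨_ | r⟩
      · exact ⟨1, by simp [show FreeGroup.of (.up none) = a t from rfl]⟩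
      · refine ⟨.of r.val, ?_⟩
        simp only [liftB_of, B_natCast_val]
        simp [show FreeGroup.of (.up (some r)) = b t r from rfl]
    | inv_of x hx =>
      convert a_zpow_mul_mul_mem_range t (-(expA t (.of x)).toAdd) (inv_mem hx) using 1
      simp only [_root_.map_inv, toAdd_inv, neg_neg]
      group
    | mul x y hx hy =>
      convert mul_mem hx (a_zpow_mul_mul_mem_range t (expA t x).toAdd hy) using 1
      simp only [_root_.map_mul, toAdd_mul, neg_add]
      group
  intro x hx
  simpa [(expA t).mem_ker.mp hx] using key x

def vert (s t : ℕ) : H.{u} s →* H.{u} t :=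
  FreeGroup.lift fun x => x.down.elim (a t ^ 2 ^ (s - t)) fun r => B t r.val

@[simp] theorem vert_a (s t : ℕ) : vert.{u} s t (a s) = a t ^ 2 ^ (s - t) :=
  FreeGroup.lift_apply_of

@[simp] theorem vert_b (s t : ℕ) (r : ZMod (2 ^ s)) : vert.{u} s t (b s r) = B t r.val :=
  FreeGroup.lift_apply_of

theorem vert_B {s t : ℕ} (hts : t ≤ s) (m : ℤ) : vert.{u} s t (B s m) = B t m := by
  have hm : ((m : ZMod (2 ^ s)).val : ℤ) + 2 ^ (s - t) * (m / 2 ^ s) * 2 ^ t = m := by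
    rw [ZMod.val_intCast, mul_right_comm, ← pow_add, Nat.sub_add_cancel hts]
    push_cast
    linarith [Int.emod_add_mul_ediv m (2 ^ s)]
  rw [B, map_mul, map_mul, map_zpow, map_zpow, vert_a, vert_b, ← zpow_natCast, ← zpow_mul,
    ← zpow_mul, mul_neg]
  conv_rhs => rw [← hm, B_add_mul]
  push_cast
  rfl

theorem vert_comp_liftB {s t : ℕ} (hts : t ≤ s) : (vert.{u} s t).comp (liftB s) = liftB t :=
  FreeGroup.ext_hom _ _ fun m => by simp [vert_B hts]

theorem expA_vert (s t : ℕ) (x : H.{u} s) : expA t (vert s t x) = expA s x ^ 2 ^ (s - t) := by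
  have : (expA t).comp (vert s t) = (powMonoidHom (2 ^ (s - t))).comp (expA s) :=
    hom_ext (by simp) fun m => by
      simp [B, map_zpow]
  exact DFunLike.congr_fun this x

def coverAction (t : ℕ) : H.{u} t →* Equiv.Perm (H.{u} (t + 1) ⊕ H.{u} (t + 1)) :=
  FreeGroup.lift fun x => x.down.elim
    ((Equiv.sumCongr (Equiv.mulLeft (a (t + 1))) (Equiv.refl _)).trans (Equiv.sumComm _ _))
    fun r => Equiv.sumCongr (Equiv.mulLeft (B (t + 1) r.val))
      (Equiv.mulLeft (B (t + 1) (r.val + 2 ^ t)))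

@[simp] theorem coverAction_a_inl (t : ℕ) (y : H.{u} (t + 1)) :
    coverAction t (a t) (.inl y) = .inr (a (t + 1) * y) := by
  simp [coverAction, a]

@[simp] theorem coverAction_a_inr (t : ℕ) (y : H.{u} (t + 1)) :
    coverAction t (a t) (.inr y) = .inl y := by
  simp [coverAction, a]

@[simp] theorem coverAction_b_inl (t : ℕ) (r : ZMod (2 ^ t)) (y : H.{u} (t + 1)) :
    coverAction t (b t r) (.inl y) = .inl (B (t + 1) r.val * y) := by
  simp [coverAction, b]

@[simp] theorem coverAction_b_inr (t : ℕ) (r : ZMod (2 ^ t)) (y : H.{u} (t + 1)) :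
    coverAction t (b t r) (.inr y) = .inr (B (t + 1) (r.val + 2 ^ t) * y) := by
  simp [coverAction, b]

theorem coverAction_B_inl (t n : ℕ) (hn : n < 2 ^ (t + 1)) (y : H.{u} (t + 1)) :
    coverAction t (B t n) (.inl y) = .inl (B (t + 1) n * y) := by
  rcases lt_or_ge n (2 ^ t) with hlt | hge
  · rw [← ZMod.val_natCast_of_lt hlt, B_natCast_val, coverAction_b_inl]
  · obtain ⟨n, rfl⟩ := Nat.exists_eq_add_of_le' hge
    have hlt : n < 2 ^ t := by rw [pow_succ] at hn; omega
    have hB : B.{u} t ((n + 2 ^ t : ℕ) : ℤ) = a t * B t n * (a t)⁻¹ := by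
      simpa using B_add_mul t n 1
    rw [hB, ← ZMod.val_natCast_of_lt hlt, B_natCast_val, map_mul, map_mul, map_inv,
      Equiv.Perm.mul_apply, Equiv.Perm.mul_apply, Equiv.Perm.inv_eq_iff_eq.mpr
        (coverAction_a_inr t y).symm, coverAction_b_inr, coverAction_a_inr]
    push_cast
    rfl

/-- Kaloujnine–Krasner: `H t` acts on two copies of `H (t + 1)` so that the image of `vert`
acts on the first copy by left translation. -/
theorem coverAction_vert_inl (t : ℕ) (x y : H.{u} (t + 1)) :
    coverAction t (vert (t + 1) t x) (.inl y) = .inl (x * y) := by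
  induction x using FreeGroup.induction_on generalizing y with
  | C1 => simp
  | of x =>
    rcases x with ⟨_ | r⟩
    · rw [show FreeGroup.of (.up none) = a (t + 1) from rfl, vert_a, Nat.add_sub_cancel_left,
        pow_one, pow_two, map_mul, Equiv.Perm.mul_apply, coverAction_a_inl, coverAction_a_inr]
    · rw [show FreeGroup.of (.up (some r)) = b (t + 1) r from rfl, vert_b,
        coverAction_B_inl t _ (ZMod.val_lt r), B_natCast_val]
  | inv_of x hx =>
    rw [map_inv, map_inv, Equiv.Perm.inv_eq_iff_eq, hx, mul_inv_cancel_left]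
  | mul x z hx hz =>
    rw [map_mul, map_mul, Equiv.Perm.mul_apply, hz, hx, mul_assoc]

theorem vert_injective {s t : ℕ} (hst : s = t + 1) : Function.Injective (vert.{u} s t) := by
  subst hst
  intro x y hxy
  simpa [coverAction_vert_inl] using congrArg (fun g => coverAction t g (.inl 1)) hxy

def step (c m : ℤ) : Option ℤ := if m % 2 = 1 then some (m / 2 + c) else none

theorem step_add_two_mul (c m n : ℤ) : step c (m + 2 * n) = (step c m).map (· + n) := by
  have hmod : (m + 2 * n) % 2 = m % 2 := by omega
  have hdiv : (m + 2 * n) / 2 = m / 2 + n := by omega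
  unfold step
  rw [hmod, hdiv]
  split_ifs
  · rw [Option.map_some, add_right_comm]
  · rfl

theorem a_zpow_mul_elim_mul (t : ℕ) (q : ℤ) (o : Option ℤ) :
    a t ^ q * o.elim 1 (B.{u} t) * a t ^ (-q) = (o.map (· + q * 2 ^ t)).elim 1 (B t) := by
  cases o <;> simp [B_add_mul, zpow_neg]

def horiz (c : ℤ) (s t : ℕ) : H.{u} s →* H.{u} t :=
  FreeGroup.lift fun x => x.down.elim (a t) fun r => (step c r.val).elim 1 (B t)

@[simp] theorem horiz_a (c : ℤ) (s t : ℕ) : horiz.{u} c s t (a s) = a t :=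
  FreeGroup.lift_apply_of

@[simp] theorem horiz_b (c : ℤ) (s t : ℕ) (r : ZMod (2 ^ s)) :
    horiz.{u} c s t (b s r) = (step c r.val).elim 1 (B t) :=
  FreeGroup.lift_apply_of

theorem horiz_B (c : ℤ) {s t : ℕ} (hst : s = t + 1) (m : ℤ) :
    horiz.{u} c s t (B s m) = (step c m).elim 1 (B t) := by
  subst hst
  have hm : ((m : ZMod (2 ^ (t + 1))).val : ℤ) + 2 * (m / 2 ^ (t + 1) * 2 ^ t) = m := by
    rw [ZMod.val_intCast, mul_left_comm, ← pow_succ']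
    push_cast
    linarith [Int.emod_add_mul_ediv m (2 ^ (t + 1))]
  rw [B, map_mul, map_mul, map_zpow, map_zpow, horiz_a, horiz_b, a_zpow_mul_elim_mul,
    ← step_add_two_mul, hm]

theorem horiz_comp_vert (c : ℤ) {r s t : ℕ} (hrs : r = s + 1) (hst : s = t + 1) :
    (horiz.{u} c s t).comp (vert r s) = (vert s t).comp (horiz c r s) := by
  refine hom_ext ?_ fun m => ?_
  · simp only [MonoidHom.comp_apply, vert_a, horiz_a, map_pow]
    congr 2
    omega
  · simp only [MonoidHom.comp_apply, vert_B (show s ≤ r by omega), horiz_B c hst,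
      horiz_B c hrs]
    cases step c m <;> simp [vert_B (show t ≤ s by omega)]

def orbit (j : ℕ) : ℕ → ℤ → Option ℤ
  | 0, m => some m
  | k + 1, m => (orbit j k m).bind (step ((j + k : ℕ) % 2))

def potential (j : ℕ) (m : ℤ) : ℤ := 3 * m - 1 + 2 * ((j : ℤ) % 2)

theorem potential_ne_zero (j : ℕ) (m : ℤ) : potential j m ≠ 0 := by
  unfold potential
  omega

theorem two_mul_potential_of_step {j : ℕ} {m v : ℤ} (h : step ((j : ℤ) % 2) m = some v) :
    2 * potential (j + 1) v = potential j m := by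
  unfold step at h
  split_ifs at h with hm
  cases h
  unfold potential
  push_cast
  omega

theorem two_pow_mul_potential_of_orbit {j k : ℕ} {m v : ℤ} (h : orbit j k m = some v) :
    2 ^ k * potential (j + k) v = potential j m := by
  induction k generalizing v with
  | zero => cases h; simp
  | succ k ih =>
    obtain ⟨w, hw, hstep⟩ := Option.bind_eq_some_iff.mp h
    rw [← ih hw, ← two_mul_potential_of_step hstep, pow_succ, ← add_assoc]
    ring

theorem orbit_eq_none {j k : ℕ} {m : ℤ} (h : |potential j m| < 2 ^ k) : orbit j k m = none := by
  cases ho : orbit j k m with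
  | none => rfl
  | some v =>
    have hle : (2 : ℤ) ^ k ≤ |potential j m| := by
      rw [← two_pow_mul_potential_of_orbit ho, abs_mul, abs_of_pos (by positivity)]
      exact le_mul_of_one_le_right (by positivity) (Int.one_le_abs (potential_ne_zero _ _))
    exact absurd h (not_lt.mpr hle)

theorem exists_orbit_eq_some (j k : ℕ) (v : ℤ) : ∃ m, orbit j k m = some v := by
  induction k generalizing v with
  | zero => exact ⟨v, rfl⟩
  | succ k ih =>
    obtain ⟨m, hm⟩ := ih (2 * (v - ((j + k : ℕ) : ℤ) % 2) + 1)
    refine ⟨m, ?_⟩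
    simp only [orbit, hm, Option.bind_some, step]
    rw [if_pos (by omega)]
    congr 1
    omega

abbrev tower (i j : ℕ) : GrpCat.{u} := GrpCat.of (H (i - j))

def vmap (i j : ℕ) : H.{u} (i + 1 - j) →* H.{u} (i - j) :=
  if j ≤ i then vert (i + 1 - j) (i - j) else 1

def hmap (i j : ℕ) : H.{u} (i - j) →* H.{u} (i - (j + 1)) :=
  if j < i then horiz ((j : ℤ) % 2) (i - j) (i - (j + 1)) else 1

theorem hmap_comp_vmap (i j : ℕ) :
    (hmap.{u} i j).comp (vmap i j) = (vmap i (j + 1)).comp (hmap (i + 1) j) := by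
  by_cases hji : j < i
  · simp only [hmap, vmap, if_pos hji, if_pos hji.le, if_pos (show j + 1 ≤ i by omega),
      if_pos (show j < i + 1 by omega)]
    rw [Nat.add_sub_add_right]
    refine horiz_comp_vert _ ?_ ?_ <;> omega
  · simp only [hmap, vmap, if_neg hji, if_neg (show ¬j + 1 ≤ i by omega), MonoidHom.one_comp]

theorem hIterM_B {i j k : ℕ} (h : j + k ≤ i) (m : ℤ) :
    hIterM tower hmap.{u} i j k (B (i - j) m) = (orbit j k m).elim 1 (B (i - (j + k))) := by
  induction k with
  | zero => rfl
  | succ k ih =>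
    change hmap i (j + k) (hIterM tower hmap i j k (B (i - j) m)) = _
    rw [ih (by omega), hmap, if_pos (by omega), orbit]
    cases orbit j k m with
    | none => exact map_one _
    | some w => exact horiz_B _ (by omega) w

theorem hIterM_eq_one {i j k : ℕ} (hk : 0 < k) (h : i < j + k) :
    hIterM tower hmap.{u} i j k = 1 := by
  obtain ⟨k, rfl⟩ := Nat.exists_eq_succ_of_ne_zero hk.ne'
  change (hmap.{u} i (j + k)).comp (hIterM tower hmap i j k) = 1
  rw [hmap, if_neg (by omega), MonoidHom.one_comp]

def IsThread (j : ℕ) (g : ∀ i, H.{u} (i - j)) : Prop := ∀ i, vmap i j (g (i + 1)) = g i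

theorem expA_thread_eq_one {j : ℕ} {g : ∀ i, H.{u} (i - j)} (hg : IsThread j g) :
    expA (j - j) (g j) = 1 := by
  have hhalf : ∀ i, j ≤ i →
      (expA (i - j) (g i)).toAdd = 2 * (expA (i + 1 - j) (g (i + 1))).toAdd := by
    intro i hi
    rw [← hg i, vmap, if_pos hi, expA_vert, show i + 1 - j - (i - j) = 1 by omega, pow_one,
      pow_two, toAdd_mul, two_mul]
  have hdvd : ∀ T i, j ≤ i → (2 : ℤ) ^ T ∣ (expA (i - j) (g i)).toAdd := by
    intro T
    induction T with
    | zero => simp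
    | succ T ih =>
      intro i hi
      rw [hhalf i hi, pow_succ']
      exact mul_dvd_mul_left 2 (ih (i + 1) (by omega))
  by_contra hne
  obtain ⟨n, hn⟩ := (Int.finiteMultiplicity_iff (a := 2)).mpr ⟨by decide, hne⟩
  exact hn (hdvd (n + 1) j le_rfl)

theorem exists_liftB_of_isThread {j : ℕ} {g : ∀ i, H.{u} (i - j)} (hg : IsThread j g) :
    ∃ w, ∀ i, j ≤ i → g i = liftB (i - j) w := by
  obtain ⟨w, hw⟩ := ker_expA_le_range _ (expA_thread_eq_one hg)
  refine ⟨w, fun i hi => ?_⟩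
  induction i, hi using Nat.le_induction with
  | base => exact hw.symm
  | succ i hi ih =>
    apply vert_injective (show i + 1 - j = i - j + 1 by omega)
    calc vert _ _ (g (i + 1)) = g i := by rw [← hg i, vmap, if_pos hi]
      _ = liftB (i - j) w := ih
      _ = vert _ _ (liftB (i + 1 - j) w) :=
        (DFunLike.congr_fun (vert_comp_liftB (by omega)) w).symm

theorem exists_hIterM_eq_one_of_isThread {j : ℕ} {g : ∀ i, H.{u} (i - j)} (hg : IsThread j g) :
    ∃ k, ∀ i, hIterM tower hmap i j k (g i) = 1 := by
  obtain ⟨w, hw⟩ := exists_liftB_of_isThread hg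
  obtain ⟨s, hs⟩ := w.exists_finset_mem_closure
  set N := s.sup fun m => (potential j m).natAbs
  refine ⟨N + 1, fun i => ?_⟩
  rcases lt_or_ge i (j + (N + 1)) with hi | hi
  · rw [hIterM_eq_one (Nat.succ_pos N) hi]
    rfl
  rw [hw i (by omega), ← MonoidHom.comp_apply, ← MonoidHom.mem_ker]
  refine (Subgroup.closure_le _).mpr ?_ hs
  rintro _ ⟨m, hm, rfl⟩
  have hlt : |potential j m| < 2 ^ (N + 1) := by
    have : (potential j m).natAbs < 2 ^ (N + 1) :=
      (Finset.le_sup (f := fun m => (potential j m).natAbs) hm).trans_lt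
        (Nat.lt_two_pow_self.trans (Nat.pow_lt_pow_right (by norm_num) (Nat.lt_succ_self N)))
    rw [Int.abs_eq_natAbs]
    exact_mod_cast this
  simp [hIterM_B (show j + (N + 1) ≤ i by omega), orbit_eq_none hlt]

theorem exists_isThread_hIterM_ne_one (j k : ℕ) :
    ∃ g : ∀ i, H.{u} (i - j), IsThread j g ∧
      hIterM tower hmap (j + k) j k (g (j + k)) ≠ 1 := by
  obtain ⟨m, hm⟩ := exists_orbit_eq_some j k 0
  refine ⟨fun i => if j ≤ i then B (i - j) m else 1, fun i => ?_, ?_⟩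
  · by_cases hi : j ≤ i
    · simp only [vmap, if_pos hi, if_pos (Nat.le_succ_of_le hi),
        vert_B (show i - j ≤ i + 1 - j by omega)]
    · simp only [vmap, if_neg hi, MonoidHom.one_apply]
  · simp only [le_add_iff_nonneg_right, zero_le, if_true, hIterM_B le_rfl, hm, Option.elim_some]
    exact B_ne_one _ _

end FreeTower

/-- Example: there is a direct sequence of towers of groups, with every `G_{ij}` a
free group of finite rank (in particular finitely generated), such that the colimit of
the inverse limits `Γ_j = lim_i G_{ij}` is trivial, yet no composite homomorphism
`Γ_j → Γ_k` (`k ≥ j`) is trivial.  Hence commutativity cannot be dropped from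
Theorem A(a). -/
theorem stmt_14 :
    ∃ (G : ℕ → ℕ → GrpCat) (p : ∀ i j, ↥(G (i + 1) j) →* ↥(G i j))
      (h : ∀ i j, ↥(G i j) →* ↥(G i (j + 1))),
      (∀ i j (g : ↥(G (i + 1) j)), h i j (p i j g) = p i (j + 1) (h (i + 1) j g)) ∧
      (∀ i j, ∃ n : ℕ, Nonempty (↥(G i j) ≃* FreeGroup (Fin n))) ∧
      -- the colimit of the `Γ_j = lim_i G_{ij}` is trivial
      (∀ j (g : ∀ i, ↥(G i j)), (∀ i, p i j (g (i + 1)) = g i) →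
        ∃ k, ∀ i, hIterM G h i j k (g i) = 1) ∧
      -- but no composite homomorphism `Γ_j → Γ_k` is trivial
      (∀ j k, ∃ g : ∀ i, ↥(G i j), (∀ i, p i j (g (i + 1)) = g i) ∧
        ¬(∀ i, hIterM G h i j k (g i) = 1)) := by
  refine ⟨FreeTower.tower, FreeTower.vmap, FreeTower.hmap,
    fun i j => DFunLike.congr_fun (FreeTower.hmap_comp_vmap i j),
    fun i j => ⟨_, ⟨FreeGroup.freeGroupCongr (Fintype.equivFin _)⟩⟩,
    fun j g hg => FreeTower.exists_hIterM_eq_one_of_isThread hg, fun j k => ?_⟩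
  obtain ⟨g, hg, hne⟩ := FreeTower.exists_isThread_hIterM_ne_one j k
  exact ⟨g, hg, fun hall => hne (hall _)⟩
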